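/- arXiv:2501.00371 — 7 statements merged into one kernel-verified Lean document; each statement's English description precedes it below -/
import Mathlib

section
/- Let R be a commutative ring and let Ã, B̃ ∈ R^{m×l} be written in row-block form Ã = (Ã₁; Ã₂), B̃ = (B̃₁; B̃₂) with blocks of size (m/2)×l (m even). Define p₁ = Ã₁ + B̃₂, p₂ = Ã₂, p₃ = B̃₁, and p₄ = Ã₂ᵀÃ₁ + B̃₂ᵀB̃₁ ∈ R^{l×l}. Then p₂ᵀp₁ + p₁ᵀp₃ − p₄ = ÃᵀB̃, with no symmetry assumption on ÃᵀB̃. -/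
open Matrix

/-- Non-symmetric structured recovery: with `p₁ = Ã₁ + B̃₂`, `p₂ = Ã₂`, `p₃ = B̃₁`,
`p₄ = Ã₂ᵀÃ₁ + B̃₂ᵀB̃₁`, one has `p₂ᵀp₁ + p₁ᵀp₃ − p₄ = ÃᵀB̃`. -/
theorem stmt2 (k l : ℕ) (R : Type) [CommRing R]
    (A₁ A₂ B₁ B₂ : Matrix (Fin k) (Fin l) R) :
    A₂ᵀ * (A₁ + B₂) + (A₁ + B₂)ᵀ * B₁ - (A₂ᵀ * A₁ + B₂ᵀ * B₁)
      = (Matrix.fromRows A₁ A₂)ᵀ * Matrix.fromRows B₁ B₂ := by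
  rw [transpose_fromRows, fromCols_mul_fromRows]
  simp [Matrix.mul_add, Matrix.add_mul, transpose_add]
  noncomm_ring
end

section
/- Let R be a commutative ring, s ≥ 1, and let A₀, …, A_{s−1} and B₀, …, B_{s−1} be matrices in R^{k×m}. Define the matrix-coefficient polynomial p(X) = (Σ_{j=0}^{s−1} Aⱼ Xʲ)ᵀ · (Σ_{k=0}^{s−1} B_k X^{s−1−k}) = Σ_{j,k} AⱼᵀB_k X^{j+s−1−k}. Then p has degree at most 2s−2, and the coefficient of X^{s−1} in p equals Σ_{j=0}^{s−1} AⱼᵀBⱼ, which is exactly AᵀB for the row-block matrices A = (A₀; …; A_{s−1}), B = (B₀; …; B_{s−1}). -/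
open Matrix

/-- MatDot correctness: the polynomial `p(X) = Σ_{j,t} AⱼᵀB_t X^{j+s−1−t}` has degree at
most `2s−2`, and its coefficient at `X^{s−1}` is `Σⱼ AⱼᵀBⱼ`, which equals `AᵀB` for the
row-block stacked matrices `A = (A₀; …; A_{s−1})`, `B = (B₀; …; B_{s−1})`. -/
theorem stmt12 (R : Type) [CommRing R] (s k m : ℕ) (hs : 1 ≤ s)
    (A B : Fin s → Matrix (Fin k) (Fin m) R) :
    let p : Polynomial (Matrix (Fin m) (Fin m) R) :=
      ∑ j : Fin s, ∑ t : Fin s,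
        Polynomial.C ((A j)ᵀ * B t) * Polynomial.X ^ ((j : ℕ) + (s - 1 - (t : ℕ)))
    p.natDegree ≤ 2 * s - 2 ∧
    p.coeff (s - 1) = ∑ j : Fin s, (A j)ᵀ * B j ∧
    p.coeff (s - 1)
      = (Matrix.of fun (ji : Fin s × Fin k) c => A ji.1 ji.2 c)ᵀ *
        (Matrix.of fun (ji : Fin s × Fin k) c => B ji.1 ji.2 c) := by
  intro p
  have hcoeff : p.coeff (s - 1) = ∑ j : Fin s, (A j)ᵀ * B j := by
    simp only [p, Polynomial.finset_sum_coeff, Polynomial.coeff_C_mul,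
      Polynomial.coeff_X_pow]
    refine Finset.sum_congr rfl fun j _ => ?_
    rw [Finset.sum_eq_single j]
    · have ht : (j : ℕ) + (s - 1 - (j : ℕ)) = s - 1 := by
        have := j.2; omega
      simp [ht]
    · intro t _ hne
      have h1 : (j : ℕ) + (s - 1 - (t : ℕ)) ≠ s - 1 := by
        have := j.2; have := t.2
        have : (j : ℕ) ≠ (t : ℕ) := fun h => hne (Fin.ext h.symm)
        omega
      rw [if_neg (Ne.symm h1), mul_zero]
    · intro h; exact absurd (Finset.mem_univ j) h
  refine ⟨?_, hcoeff, ?_⟩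
  · apply Polynomial.natDegree_sum_le_of_forall_le
    intro j _
    apply Polynomial.natDegree_sum_le_of_forall_le
    intro t _
    calc (Polynomial.C ((A j)ᵀ * B t) * Polynomial.X ^ ((j:ℕ) + (s - 1 - (t:ℕ)))).natDegree
        ≤ (j:ℕ) + (s - 1 - (t:ℕ)) := Polynomial.natDegree_C_mul_X_pow_le _ _
      _ ≤ 2 * s - 2 := by have := j.2; have := t.2; omega
  · rw [hcoeff]
    ext c c'
    simp only [Matrix.sum_apply, Matrix.mul_apply, Matrix.transpose_apply, Matrix.of_apply]
    rw [Fintype.sum_prod_type]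
end

section
/- Let s_r, s_c ≥ 1. The map ψ : {0,…,s_c−1} × {−(s_r−1),…,s_r−1} × {0,…,s_c−1} → ℤ given by ψ(k, δ, k') = k + s_c(s_r−1+δ) + s_c(2s_r−1)k' is injective, takes values in {0, 1, …, s_c²(2s_r−1) − 1}, and attains the maximum value s_c²(2s_r−1) − 1. Consequently, in the StPolyDot worker polynomial Σ_{j,k,j',k'} A_{j,k}ᵀB_{j',k'} X^{k + s_c(s_r−1−j'+j) + s_c(2s_r−1)k'} (indices j, j' ∈ {0,…,s_r−1}, k, k' ∈ {0,…,s_c−1}), the coefficient of X^{k + s_c(s_r−1) + s_c(2s_r−1)k'} equals exactly Σ_{j=0}^{s_r−1} A_{j,k}ᵀB_{j,k'} for each pair (k, k'). -/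
open Matrix

private lemma digit_inj (m x x' y y' : ℤ) (hm : 0 < m)
    (hx : 0 ≤ x) (hx2 : x < m) (hx' : 0 ≤ x') (hx2' : x' < m)
    (h : x + m * y = x' + m * y') : x = x' ∧ y = y' := by
  have hd : m * (y - y') = x' - x := by ring_nf; linarith
  have hy : y = y' := by
    rcases lt_trichotomy y y' with hlt | heq | hgt
    · have : m * 1 ≤ m * (y' - y) := by
        apply mul_le_mul_of_nonneg_left (by omega) hm.le
      nlinarith
    · exact heq
    · have : m * 1 ≤ m * (y - y') := by
        apply mul_le_mul_of_nonneg_left (by omega) hm.le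
      nlinarith
  exact ⟨by rw [hy] at hd; omega, hy⟩

/-- StPolyDot exponent separation: `ψ(k, δ, k') = k + s_c(s_r−1+δ) + s_c(2s_r−1)k'` is
injective on `{0,…,s_c−1} × {−(s_r−1),…,s_r−1} × {0,…,s_c−1}`, takes values in
`{0,…,s_c²(2s_r−1)−1}` and attains the maximum; consequently in the worker polynomial
`Σ_{j,k,j',k'} A_{j,k}ᵀB_{j',k'} X^{k + s_c(s_r−1−j'+j) + s_c(2s_r−1)k'}` the coefficient
of `X^{k + s_c(s_r−1) + s_c(2s_r−1)k'}` equals `Σⱼ A_{j,k}ᵀB_{j,k'}`. -/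
theorem stmt14 (sr sc : ℕ) (hsr : 1 ≤ sr) (hsc : 1 ≤ sc)
    (R : Type) [CommRing R] (a b : ℕ)
    (A B : Fin sr → Fin sc → Matrix (Fin a) (Fin b) R) :
    (∀ k₁ k₁' k₂ k₂' : Fin sc, ∀ δ₁ δ₂ : ℤ,
        -((sr : ℤ) - 1) ≤ δ₁ → δ₁ ≤ (sr : ℤ) - 1 →
        -((sr : ℤ) - 1) ≤ δ₂ → δ₂ ≤ (sr : ℤ) - 1 →
        (k₁ : ℤ) + sc * ((sr : ℤ) - 1 + δ₁) + sc * (2 * sr - 1) * k₁'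
          = (k₂ : ℤ) + sc * ((sr : ℤ) - 1 + δ₂) + sc * (2 * sr - 1) * k₂' →
        k₁ = k₂ ∧ δ₁ = δ₂ ∧ k₁' = k₂') ∧
    (∀ (kk kk' : Fin sc) (δ : ℤ), -((sr : ℤ) - 1) ≤ δ → δ ≤ (sr : ℤ) - 1 →
        0 ≤ (kk : ℤ) + sc * ((sr : ℤ) - 1 + δ) + sc * (2 * sr - 1) * kk' ∧
        (kk : ℤ) + sc * ((sr : ℤ) - 1 + δ) + sc * (2 * sr - 1) * kk'
          ≤ (sc : ℤ) ^ 2 * (2 * sr - 1) - 1) ∧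
    (∃ (kk kk' : Fin sc) (δ : ℤ), -((sr : ℤ) - 1) ≤ δ ∧ δ ≤ (sr : ℤ) - 1 ∧
        (kk : ℤ) + sc * ((sr : ℤ) - 1 + δ) + sc * (2 * sr - 1) * kk'
          = (sc : ℤ) ^ 2 * (2 * sr - 1) - 1) ∧
    (∀ kk kk' : Fin sc,
      ((∑ j : Fin sr, ∑ c : Fin sc, ∑ j' : Fin sr, ∑ c' : Fin sc,
          Polynomial.C ((A j c)ᵀ * B j' c') *
            Polynomial.X ^ ((c : ℕ) + sc * ((sr - 1 + (j : ℕ)) - (j' : ℕ))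
              + sc * (2 * sr - 1) * (c' : ℕ)) :
            Polynomial (Matrix (Fin b) (Fin b) R))).coeff
          ((kk : ℕ) + sc * (sr - 1) + sc * (2 * sr - 1) * (kk' : ℕ))
        = ∑ j : Fin sr, (A j kk)ᵀ * B j kk') := by
  have hscpos : (0:ℤ) < sc := by exact_mod_cast hsc
  have hsr' : (1:ℤ) ≤ sr := by exact_mod_cast hsr
  have hinj : ∀ k₁ k₁' k₂ k₂' : Fin sc, ∀ δ₁ δ₂ : ℤ,
      -((sr : ℤ) - 1) ≤ δ₁ → δ₁ ≤ (sr : ℤ) - 1 →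
      -((sr : ℤ) - 1) ≤ δ₂ → δ₂ ≤ (sr : ℤ) - 1 →
      (k₁ : ℤ) + sc * ((sr : ℤ) - 1 + δ₁) + sc * (2 * sr - 1) * k₁'
        = (k₂ : ℤ) + sc * ((sr : ℤ) - 1 + δ₂) + sc * (2 * sr - 1) * k₂' →
      k₁ = k₂ ∧ δ₁ = δ₂ ∧ k₁' = k₂' := by
    intro k₁ k₁' k₂ k₂' δ₁ δ₂ h1 h2 h3 h4 heq
    have hb1 : (k₁ : ℤ) < sc := by exact_mod_cast k₁.2
    have hb2 : (k₂ : ℤ) < sc := by exact_mod_cast k₂.2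
    have heq' : (k₁ : ℤ) + sc * ((sr - 1 + δ₁) + (2 * sr - 1) * k₁')
        = (k₂ : ℤ) + sc * ((sr - 1 + δ₂) + (2 * sr - 1) * k₂') := by ring_nf; linarith [heq]
    obtain ⟨e1, e2⟩ := digit_inj sc k₁ k₂ _ _ hscpos (Int.natCast_nonneg _) hb1
      (Int.natCast_nonneg _) hb2 heq'
    have hn : (0:ℤ) < 2 * sr - 1 := by linarith
    obtain ⟨f1, f2⟩ := digit_inj (2 * sr - 1) (sr - 1 + δ₁) (sr - 1 + δ₂) k₁' k₂' hn
      (by linarith) (by linarith) (by linarith) (by linarith) e2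
    refine ⟨Fin.ext (by exact_mod_cast e1), by linarith, Fin.ext (by exact_mod_cast f2)⟩
  refine ⟨hinj, ?_, ?_, ?_⟩
  · intro kk kk' δ h1 h2
    have hb1 : (kk : ℤ) < sc := by exact_mod_cast kk.2
    have hb2 : (kk' : ℤ) < sc := by exact_mod_cast kk'.2
    have hn1 : (0:ℤ) ≤ kk := Int.natCast_nonneg _
    have hn2 : (0:ℤ) ≤ kk' := Int.natCast_nonneg _
    constructor
    · have h3 : (0:ℤ) ≤ sc * ((sr : ℤ) - 1 + δ) := mul_nonneg hscpos.le (by linarith)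
      have h4 : (0:ℤ) ≤ sc * (2 * sr - 1) * kk' :=
        mul_nonneg (mul_nonneg hscpos.le (by linarith)) hn2
      linarith
    · nlinarith [mul_le_mul_of_nonneg_left (show ((sr:ℤ)-1+δ) ≤ 2*sr-2 by linarith) hscpos.le,
        mul_le_mul_of_nonneg_left (show (kk':ℤ) ≤ sc - 1 by linarith)
          (mul_nonneg hscpos.le (show (0:ℤ) ≤ 2*(sr:ℤ)-1 by linarith))]
  · refine ⟨⟨sc-1, by omega⟩, ⟨sc-1, by omega⟩, (sr:ℤ)-1, by linarith, le_refl _, ?_⟩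
    have : ((⟨sc-1, by omega⟩ : Fin sc) : ℤ) = (sc:ℤ) - 1 := by simp; omega
    rw [this]; ring
  · intro kk kk'
    have key : ∀ (j j' : Fin sr) (c c' : Fin sc),
        ((c : ℕ) + sc * ((sr - 1 + (j : ℕ)) - (j' : ℕ)) + sc * (2 * sr - 1) * (c' : ℕ)
          = (kk : ℕ) + sc * (sr - 1) + sc * (2 * sr - 1) * (kk' : ℕ))
        ↔ (c = kk ∧ j' = j ∧ c' = kk') := by
      intro j j' c c'
      constructor
      · intro h
        have hj' : (j' : ℕ) ≤ sr - 1 := by omega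
        have hz : (c : ℤ) + sc * ((sr : ℤ) - 1 + ((j : ℤ) - (j' : ℤ))) + sc * (2 * sr - 1) * c'
            = (kk : ℤ) + sc * ((sr : ℤ) - 1 + 0) + sc * (2 * sr - 1) * kk' := by
          have := congrArg (Nat.cast : ℕ → ℤ) h
          push_cast at this ⊢
          have hc : ((sr - 1 + (j : ℕ)) - (j' : ℕ) : ℕ) = ((sr:ℤ) - 1 + (j:ℤ)) - (j':ℤ) := by
            have := j'.2; have := j.2; push_cast; omega
          rw [hc] at this
          have hc2 : ((sr - 1 : ℕ) : ℤ) = (sr:ℤ) - 1 := by omega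
          have hc3 : ((2 * sr - 1 : ℕ) : ℤ) = 2 * (sr:ℤ) - 1 := by omega
          rw [hc2, hc3] at this
          linarith
        have h1 : -((sr:ℤ)-1) ≤ (j:ℤ) - (j':ℤ) := by
          have : (j':ℤ) ≤ (sr:ℤ) - 1 := by exact_mod_cast Nat.le_sub_one_of_lt j'.2
          have : (0:ℤ) ≤ (j:ℤ) := Int.natCast_nonneg _
          linarith
        have h2 : (j:ℤ) - (j':ℤ) ≤ (sr:ℤ) - 1 := by
          have : (j:ℤ) ≤ (sr:ℤ) - 1 := by exact_mod_cast Nat.le_sub_one_of_lt j.2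
          have : (0:ℤ) ≤ (j':ℤ) := Int.natCast_nonneg _
          linarith
        obtain ⟨e1, e2, e3⟩ := hinj c c' kk kk' _ 0 h1 h2 (by linarith) (by linarith) hz
        refine ⟨e1, Fin.ext ?_, e3⟩
        have : (j:ℤ) = (j':ℤ) := by linarith
        exact_mod_cast this.symm
      · rintro ⟨rfl, rfl, rfl⟩
        have hd : sr - 1 + (j':ℕ) - (j':ℕ) = sr - 1 := by omega
        rw [hd]
    rw [Polynomial.finset_sum_coeff]
    simp only [Polynomial.finset_sum_coeff, Polynomial.coeff_C_mul, Polynomial.coeff_X_pow,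
      mul_ite, mul_one, mul_zero]
    have : ∀ (j : Fin sr) (c : Fin sc) (j' : Fin sr) (c' : Fin sc),
        (if (kk : ℕ) + sc * (sr - 1) + sc * (2 * sr - 1) * (kk' : ℕ)
          = (c : ℕ) + sc * ((sr - 1 + (j : ℕ)) - (j' : ℕ)) + sc * (2 * sr - 1) * (c' : ℕ)
         then (A j c)ᵀ * B j' c' else 0)
        = (if c' = kk' then if j' = j then if c = kk then (A j c)ᵀ * B j' c' else 0 else 0
           else 0) := by
      intro j c j' c'
      by_cases h : c = kk ∧ j' = j ∧ c' = kk'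
      · obtain ⟨h1, h2, h3⟩ := h
        rw [if_pos ((key j j' c c').mpr ⟨h1, h2, h3⟩).symm, if_pos h3, if_pos h2, if_pos h1]
      · rw [if_neg (fun hh => h ((key j j' c c').mp hh.symm))]
        by_cases h3 : c' = kk'
        · by_cases h2 : j' = j
          · by_cases h1 : c = kk
            · exact absurd ⟨h1, h2, h3⟩ h
            · simp [h3, h2, h1]
          · simp [h3, h2]
        · simp [h3]
    simp only [this]
    simp [Finset.sum_ite_eq']
end

section
/- Let R be a commutative ring, m even, l ≥ 1. Let A ∈ R^{m×l} with row-blocks A₁, A₂ ∈ R^{(m/2)×l}, and let b ∈ R^m be a column vector with blocks b₁, b₂ ∈ R^{m/2}. Let 𝟙 ∈ R^{1×l} be the all-ones row vector. Define U = A₂ + b₁𝟙, V = A₁ + b₂𝟙 ∈ R^{(m/2)×l}, and W = A₂ᵀA₁ + 𝟙ᵀ(b₁ᵀb₂)𝟙 ∈ R^{l×l}. Then for every i ∈ {1,…,l}, the i-th diagonal entry of UᵀV − W equals the i-th entry of the matrix-vector product Aᵀb, i.e., diag(UᵀV − W) = Aᵀb. -/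
/-!
Writing the broadcast vectors as `replicateCol`, the product `UᵀV` expands by distributivity
into `A₂ᵀA₁`, the constant matrix `b₁ ⬝ᵥ b₂`, and the two cross terms `A₂ᵀb₂𝟙` and `𝟙ᵀb₁ᵀA₁`.
Subtracting `W` leaves the cross terms, whose `(i, i)` entry is `(A₂ᵀb₂)ᵢ + (A₁ᵀb₁)ᵢ = (Aᵀb)ᵢ`.
-/

open Matrix

namespace Matrix

variable {m n α : Type*} [Fintype m]

theorem transpose_add_replicateCol_mul_add_replicateCol [NonUnitalNonAssocSemiring α]
    (A₁ A₂ : Matrix m n α) (b₁ b₂ : m → α) :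
    (A₂ + replicateCol n b₁)ᵀ * (A₁ + replicateCol n b₂) =
      A₂ᵀ * A₁ + replicateRow n b₁ * replicateCol n b₂ +
        (replicateCol n (A₂ᵀ *ᵥ b₂) + replicateRow n (b₁ ᵥ* A₁)) := by
  rw [transpose_add, transpose_replicateCol, replicateCol_mulVec, replicateRow_vecMul]
  simp only [Matrix.add_mul, Matrix.mul_add]
  abel

theorem transpose_add_replicateCol_mul_add_replicateCol_sub [NonUnitalNonAssocRing α]
    (A₁ A₂ : Matrix m n α) (b₁ b₂ : m → α) :
    (A₂ + replicateCol n b₁)ᵀ * (A₁ + replicateCol n b₂) -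
        (A₂ᵀ * A₁ + replicateRow n b₁ * replicateCol n b₂) =
      replicateCol n (A₂ᵀ *ᵥ b₂) + replicateRow n (b₁ ᵥ* A₁) := by
  rw [transpose_add_replicateCol_mul_add_replicateCol, add_sub_cancel_left]

end Matrix

/-- Matrix-vector product recovery: with `U = A₂ + b₁𝟙`, `V = A₁ + b₂𝟙`,
`W = A₂ᵀA₁ + 𝟙ᵀ(b₁ᵀb₂)𝟙`, the diagonal of `UᵀV − W` equals `Aᵀb`. -/
theorem stmt15 (R : Type) [CommRing R] (k l : ℕ)
    (A₁ A₂ : Matrix (Fin k) (Fin l) R) (b₁ b₂ : Fin k → R) :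
    let U : Matrix (Fin k) (Fin l) R := A₂ + Matrix.of fun i _ => b₁ i
    let V : Matrix (Fin k) (Fin l) R := A₁ + Matrix.of fun i _ => b₂ i
    let W : Matrix (Fin l) (Fin l) R :=
      A₂ᵀ * A₁ + Matrix.of fun _ _ => dotProduct b₁ b₂
    ∀ i : Fin l, (Uᵀ * V - W) i i
      = (Matrix.fromRows A₁ A₂)ᵀ.mulVec (Sum.elim b₁ b₂) i := by
  intro U V W i
  have hUVW : Uᵀ * V - W = replicateCol (Fin l) (A₂ᵀ *ᵥ b₂) + replicateRow (Fin l) (b₁ ᵥ* A₁) :=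
    transpose_add_replicateCol_mul_add_replicateCol_sub A₁ A₂ b₁ b₂
  rw [hUVW, transpose_fromRows, fromCols_mulVec_sumElim, mulVec_transpose A₁,
    Matrix.add_apply, replicateCol_apply, replicateRow_apply, Pi.add_apply, add_comm]
end

section
/- Let R be a commutative ring, m even, l ≥ 1. For i, j ∈ {1,…,l}, let A_{1i}, A_{2i}, B_{1j}, B_{2j} ∈ R^{m/2} denote the top and bottom halves of the i-th column of A ∈ R^{m×l} and the j-th column of B ∈ R^{m×l}, and set U_{ij} = A_{2i} + B_{1j}, V_{ij} = A_{1i} + B_{2j} ∈ R^{m/2}, and W_{ij} = A_{2i}ᵀA_{1i} + B_{1j}ᵀB_{2j} ∈ R. Then for all i, i', j, j': U_{i'j'} = U_{i'j} + U_{ij'} − U_{ij}, V_{i'j'} = V_{i'j} + V_{ij'} − V_{ij}, and W_{i'j'} = W_{i'j} + W_{ij'} − W_{ij}. Moreover U_{ij}ᵀV_{ij} − W_{ij} = (AᵀB)_{ij} for every i, j. -/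
open Matrix

/-! Each of `U`, `V`, `W` splits as `f i + g j`, which alone forces the cross-relations; the
last identity is the expansion of `(A₂ + B₁) ⬝ (A₁ + B₂)`, whose cross terms are the two halves
of the dot product of the `i`-th column of `A` with the `j`-th column of `B`. -/

theorem add_eq_add_add_sub_add {G : Type*} [AddCommGroup G] (a a' b b' : G) :
    a' + b' = (a' + b) + (a + b') - (a + b) := by
  abel

theorem add_dotProduct_add_sub {n R : Type*} [Fintype n] [CommRing R] (a₁ a₂ b₁ b₂ : n → R) :
    (a₂ + b₁) ⬝ᵥ (a₁ + b₂) - (a₂ ⬝ᵥ a₁ + b₁ ⬝ᵥ b₂) = a₁ ⬝ᵥ b₁ + a₂ ⬝ᵥ b₂ := by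
  simp only [add_dotProduct, dotProduct_add, dotProduct_comm b₁ a₁]
  abel

theorem transpose_fromRows_mul_fromRows {m₁ m₂ n p R : Type*} [Fintype m₁] [Fintype m₂]
    [Semiring R] (A₁ : Matrix m₁ n R) (A₂ : Matrix m₂ n R) (B₁ : Matrix m₁ p R)
    (B₂ : Matrix m₂ p R) :
    (fromRows A₁ A₂)ᵀ * fromRows B₁ B₂ = A₁ᵀ * B₁ + A₂ᵀ * B₂ := by
  rw [transpose_fromRows, fromCols_mul_fromRows]

/-- Recursive dot-product scheme: with `U_{ij} = A_{2i} + B_{1j}`, `V_{ij} = A_{1i} + B_{2j}`,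
`W_{ij} = A_{2i}ᵀA_{1i} + B_{1j}ᵀB_{2j}`, the cross-relations
`X_{i'j'} = X_{i'j} + X_{ij'} − X_{ij}` hold for `X ∈ {U, V, W}`, and
`U_{ij}ᵀV_{ij} − W_{ij} = (AᵀB)_{ij}`. -/
theorem stmt16 (R : Type) [CommRing R] (k l : ℕ)
    (A₁ A₂ B₁ B₂ : Matrix (Fin k) (Fin l) R) :
    let U : Fin l → Fin l → (Fin k → R) := fun i j r => A₂ r i + B₁ r j
    let V : Fin l → Fin l → (Fin k → R) := fun i j r => A₁ r i + B₂ r j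
    let W : Fin l → Fin l → R := fun i j =>
      dotProduct (fun r => A₂ r i) (fun r => A₁ r i)
        + dotProduct (fun r => B₁ r j) (fun r => B₂ r j)
    (∀ i i' j j' : Fin l, U i' j' = U i' j + U i j' - U i j) ∧
    (∀ i i' j j' : Fin l, V i' j' = V i' j + V i j' - V i j) ∧
    (∀ i i' j j' : Fin l, W i' j' = W i' j + W i j' - W i j) ∧
    (∀ i j : Fin l, dotProduct (U i j) (V i j) - W i j
      = ((Matrix.fromRows A₁ A₂)ᵀ * Matrix.fromRows B₁ B₂) i j) := by
  refine ⟨fun i i' j j' => add_eq_add_add_sub_add (A₂ᵀ i) (A₂ᵀ i') (B₁ᵀ j) (B₁ᵀ j'),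
    fun i i' j j' => add_eq_add_add_sub_add (A₁ᵀ i) (A₁ᵀ i') (B₂ᵀ j) (B₂ᵀ j'),
    fun i i' j j' => add_eq_add_add_sub_add (A₂ᵀ i ⬝ᵥ A₁ᵀ i) (A₂ᵀ i' ⬝ᵥ A₁ᵀ i')
      (B₁ᵀ j ⬝ᵥ B₂ᵀ j) (B₁ᵀ j' ⬝ᵥ B₂ᵀ j'),
    fun i j => ?_⟩
  rw [transpose_fromRows_mul_fromRows, Matrix.add_apply, mul_apply', mul_apply']
  exact add_dotProduct_add_sub (A₁ᵀ i) (A₂ᵀ i) (B₁ᵀ j) (B₂ᵀ j)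
end

section
/- With the notation U_{ij} = A_{2i} + B_{1j}, V_{ij} = A_{1i} + B_{2j}, W_{ij} = A_{2i}ᵀA_{1i} + B_{1j}ᵀB_{2j} over a commutative ring R (columns split in halves, m even), let d_{ij} = U_{ij}ᵀV_{ij} − W_{ij} = (AᵀB)_{ij}. Then for all i < j: d_{ij} + d_{ji} = (U_{ii}+U_{jj})ᵀ(V_{ii}+V_{jj}) − (W_{ii}+W_{jj}) + 2·U_{ij}ᵀV_{ij} − U_{ij}ᵀ(V_{ii}+V_{jj}) − (U_{ii}+U_{jj})ᵀV_{ij}. In particular, if AᵀB is symmetric and 2 is invertible in R, then d_{ij} is determined by the diagonal data {U_{ii}, V_{ii}, W_{ii}} together with the off-diagonal pair (U_{ij}, V_{ij}) alone, without W_{ij}. -/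
open Matrix

/-!
Write `U i j = a i + b j`, `V i j = c i + e j` and `W i j = p i + q j`. Expanding,
`U i j ⬝ᵥ V i j - W i j = a i ⬝ᵥ e j + b j ⬝ᵥ c i` once `p i = a i ⬝ᵥ c i` and `q j = b j ⬝ᵥ e j`,
which is the `(i, j)` entry of `AᵀB`. Every family of the form `f i + g j` satisfies the
cross-relation `F j i = (F i i + F j j) - F i j`, so `d j i` is a function of the diagonal data
and of `U i j`, `V i j`, `W i j`; in `d i j + d j i` the two occurrences of `W i j` cancel.
-/

theorem add_swap_eq_add_add_sub {ι M : Type*} [AddCommGroup M] (f g : ι → M) (i j : ι) :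
    f j + g i = (f i + g i) + (f j + g j) - (f i + g j) := by
  abel

section DotProduct

variable {R n : Type*} [CommRing R] [Fintype n]

theorem add_dotProduct_add_sub_add (x y z w : n → R) :
    (x + y) ⬝ᵥ (z + w) - (x ⬝ᵥ z + y ⬝ᵥ w) = x ⬝ᵥ w + y ⬝ᵥ z := by
  simp only [add_dotProduct, dotProduct_add]
  ring

theorem dotProduct_sub_add_sub_dotProduct_sub_sub (u v s t : n → R) (w σ : R) :
    (u ⬝ᵥ v - w) + ((s - u) ⬝ᵥ (t - v) - (σ - w))
      = s ⬝ᵥ t - σ + 2 * u ⬝ᵥ v - u ⬝ᵥ t - s ⬝ᵥ v := by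
  simp only [sub_dotProduct, dotProduct_sub]
  ring

end DotProduct

theorem transpose_fromRows_mul_fromRows_apply {R m₁ m₂ n p : Type*} [CommRing R]
    [Fintype m₁] [Fintype m₂] (A₁ : Matrix m₁ n R) (A₂ : Matrix m₂ n R)
    (B₁ : Matrix m₁ p R) (B₂ : Matrix m₂ p R) (i : n) (j : p) :
    ((fromRows A₁ A₂)ᵀ * fromRows B₁ B₂) i j
      = (fun r => A₁ r i) ⬝ᵥ (fun r => B₁ r j) + (fun r => A₂ r i) ⬝ᵥ (fun r => B₂ r j) := by
  rw [transpose_fromRows, fromCols_mul_fromRows]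
  rfl

/-- Symmetric recursive scheme: with `d_{ij} = U_{ij}ᵀV_{ij} − W_{ij} = (AᵀB)_{ij}`,
for `i < j` one has
`d_{ij} + d_{ji} = (U_{ii}+U_{jj})ᵀ(V_{ii}+V_{jj}) − (W_{ii}+W_{jj}) + 2U_{ij}ᵀV_{ij}
 − U_{ij}ᵀ(V_{ii}+V_{jj}) − (U_{ii}+U_{jj})ᵀV_{ij}`;
if `AᵀB` is symmetric and `2` is invertible, `d_{ij}` equals half that expression. -/
theorem stmt17 (R : Type) [CommRing R] (k l : ℕ)
    (A₁ A₂ B₁ B₂ : Matrix (Fin k) (Fin l) R) :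
    let U : Fin l → Fin l → (Fin k → R) := fun i j r => A₂ r i + B₁ r j
    let V : Fin l → Fin l → (Fin k → R) := fun i j r => A₁ r i + B₂ r j
    let W : Fin l → Fin l → R := fun i j =>
      dotProduct (fun r => A₂ r i) (fun r => A₁ r i)
        + dotProduct (fun r => B₁ r j) (fun r => B₂ r j)
    let d : Fin l → Fin l → R := fun i j => dotProduct (U i j) (V i j) - W i j
    (∀ i j : Fin l, d i j = ((Matrix.fromRows A₁ A₂)ᵀ * Matrix.fromRows B₁ B₂) i j) ∧
    (∀ i j : Fin l, i < j →
      d i j + d j i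
        = dotProduct (U i i + U j j) (V i i + V j j) - (W i i + W j j)
          + 2 * dotProduct (U i j) (V i j)
          - dotProduct (U i j) (V i i + V j j)
          - dotProduct (U i i + U j j) (V i j)) ∧
    (((Matrix.fromRows A₁ A₂)ᵀ * Matrix.fromRows B₁ B₂)ᵀ
        = (Matrix.fromRows A₁ A₂)ᵀ * Matrix.fromRows B₁ B₂ →
      ∀ _inst : Invertible (2 : R), ∀ i j : Fin l, i < j →
        d i j = _inst.invOf *
          (dotProduct (U i i + U j j) (V i i + V j j) - (W i i + W j j)
            + 2 * dotProduct (U i j) (V i j)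
            - dotProduct (U i j) (V i i + V j j)
            - dotProduct (U i i + U j j) (V i j))) := by
  intro U V W d
  have hd : ∀ i j, d i j = ((fromRows A₁ A₂)ᵀ * fromRows B₁ B₂) i j := fun i j => by
    rw [transpose_fromRows_mul_fromRows_apply, add_comm, dotProduct_comm (fun r => A₁ r i)]
    exact add_dotProduct_add_sub_add _ _ _ _
  have hsum : ∀ i j, d i j + d j i
      = (U i i + U j j) ⬝ᵥ (V i i + V j j) - (W i i + W j j) + 2 * U i j ⬝ᵥ V i j
        - U i j ⬝ᵥ (V i i + V j j) - (U i i + U j j) ⬝ᵥ V i j := fun i j => by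
    have hU : U j i = U i i + U j j - U i j :=
      add_swap_eq_add_add_sub (fun i r => A₂ r i) (fun j r => B₁ r j) i j
    have hV : V j i = V i i + V j j - V i j :=
      add_swap_eq_add_add_sub (fun i r => A₁ r i) (fun j r => B₂ r j) i j
    have hW : W j i = W i i + W j j - W i j :=
      add_swap_eq_add_add_sub (fun i => (fun r => A₂ r i) ⬝ᵥ (fun r => A₁ r i))
        (fun j => (fun r => B₁ r j) ⬝ᵥ (fun r => B₂ r j)) i j
    change d i j + (U j i ⬝ᵥ V j i - W j i) = _
    rw [hU, hV, hW]
    exact dotProduct_sub_add_sub_dotProduct_sub_sub _ _ _ _ _ _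
  refine ⟨hd, fun i j _ => hsum i j, fun hsymm _ i j _ => ?_⟩
  have hdji : d j i = d i j := by
    rw [hd, hd]
    exact congrFun (congrFun hsymm i) j
  rw [eq_comm, invOf_mul_eq_iff_eq_mul_left, ← hsum, hdji, two_mul]
end

section
/- Let R be a commutative ring and let A, B, C, D ∈ R^{m×n}. Write C and D in row-block form C = (C₁; C₂), D = (D₁; D₂) with C₁, C₂, D₁, D₂ ∈ R^{(m/2)×n} (m even). Then the 4-matrix chain product satisfies AᵀBCᵀD = Aᵀ(BC₁ᵀD₁ + BC₂ᵀD₂); moreover, writing E = BC₁ᵀD₁ + BC₂ᵀD₂ = (E₁; E₂) in row blocks and given the polynomials p₅ = A₁ + E₂, p₆ = A₂, p₇ = E₁, p₈ = A₂ᵀA₁ + E₂ᵀE₁ (where A = (A₁; A₂)), one has p₆ᵀp₅ + p₅ᵀp₇ − p₈ = AᵀE = AᵀBCᵀD. -/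
open Matrix

/-- Recursive 4-matrix chain multiplication: with `C = (C₁; C₂)`, `D = (D₁; D₂)` and
`E = BC₁ᵀD₁ + BC₂ᵀD₂`, one has `AᵀBCᵀD = AᵀE`; moreover with `A = (A₁; A₂)`,
`E = (E₁; E₂)` and `p₅ = A₁ + E₂`, `p₆ = A₂`, `p₇ = E₁`, `p₈ = A₂ᵀA₁ + E₂ᵀE₁`,
one has `p₆ᵀp₅ + p₅ᵀp₇ − p₈ = AᵀE = AᵀBCᵀD`. -/
theorem stmt19 (R : Type) [CommRing R] (k n : ℕ)
    (A B : Matrix (Fin k ⊕ Fin k) (Fin n) R)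
    (C₁ C₂ D₁ D₂ : Matrix (Fin k) (Fin n) R) :
    let C := Matrix.fromRows C₁ C₂
    let D := Matrix.fromRows D₁ D₂
    let E := B * C₁ᵀ * D₁ + B * C₂ᵀ * D₂
    (Aᵀ * B * Cᵀ * D = Aᵀ * E) ∧
    ((Matrix.toRows₂ A)ᵀ * (Matrix.toRows₁ A + Matrix.toRows₂ E)
        + (Matrix.toRows₁ A + Matrix.toRows₂ E)ᵀ * Matrix.toRows₁ E
        - ((Matrix.toRows₂ A)ᵀ * Matrix.toRows₁ A + (Matrix.toRows₂ E)ᵀ * Matrix.toRows₁ E)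
      = Aᵀ * E) := by
  intro C D E
  have key : ∀ X Y : Matrix (Fin k ⊕ Fin k) (Fin n) R,
      Xᵀ * Y = (Matrix.toRows₁ X)ᵀ * Matrix.toRows₁ Y
        + (Matrix.toRows₂ X)ᵀ * Matrix.toRows₂ Y := by
    intro X Y
    conv_lhs => rw [← Matrix.fromRows_toRows X, ← Matrix.fromRows_toRows Y]
    rw [Matrix.transpose_fromRows, Matrix.fromCols_mul_fromRows]
  constructor
  · have hC : Cᵀ * D = C₁ᵀ * D₁ + C₂ᵀ * D₂ := by
      simp [C, D, Matrix.transpose_fromRows, Matrix.fromCols_mul_fromRows]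
    rw [Matrix.mul_assoc (Aᵀ * B), hC, Matrix.mul_assoc Aᵀ B]
    simp only [E, Matrix.mul_add, Matrix.mul_assoc]
  · rw [key A E]
    generalize Matrix.toRows₁ A = a1
    generalize Matrix.toRows₂ A = a2
    generalize Matrix.toRows₁ E = e1
    generalize Matrix.toRows₂ E = e2
    simp only [Matrix.mul_add, Matrix.transpose_add, Matrix.add_mul]
    abel
end
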